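/- Let L_A be an invertible real m×m matrix and L_B an invertible real n×n matrix, set A = L_A L_Aᵀ, B = L_B L_Bᵀ, let W* be a real n×m matrix, and let M = L_Bᵀ W* L_A. Then a real n×m matrix W with rank(W) ≤ r minimizes the weighted objective W ↦ vec(W* − W)ᵀ (B ⊗ A) vec(W* − W) over all n×m matrices of rank at most r if and only if the matrix L_Bᵀ W L_A has rank at most r and minimizes Y ↦ ‖M − Y‖_F over all n×m matrices Y of rank at most r. -/

import Mathlib

open Matrix Kronecker

/-- Row-major vectorization of a matrix: `vecM X (i, j) = X i j`. -/
def vecM {n m : Type*} (X : Matrix n m ℝ) : n × m → ℝ := fun p => X p.1 p.2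

/-- Frobenius norm: `‖X‖_F = √(trace (Xᵀ * X))`. -/
noncomputable def frobNorm {n m : Type*} [Fintype n] [Fintype m] (X : Matrix n m ℝ) : ℝ :=
  Real.sqrt (Matrix.trace (Xᵀ * X))

/-! The weight factors as `B ⊗ A = (L_B ⊗ L_A)(L_B ⊗ L_A)ᵀ`, so the weighted objective at `W` is
`‖L_Bᵀ (W* − W) L_A‖_F²`. Since `W ↦ L_Bᵀ W L_A` is a rank-preserving bijection, it carries the
weighted problem onto the unweighted one with target `M`. -/

theorem vecM_eq_vec_transpose {n m : Type*} (X : Matrix n m ℝ) : vecM X = vec Xᵀ := rfl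

section

variable {n m : Type*} [Fintype n] [Fintype m]

theorem kronecker_mulVec_vecM (P : Matrix n n ℝ) (Q : Matrix m m ℝ) (C : Matrix n m ℝ) :
    (P ⊗ₖ Q) *ᵥ vecM C = vecM (P * C * Qᵀ) := by
  rw [vecM_eq_vec_transpose, vecM_eq_vec_transpose, kronecker_mulVec_vec, transpose_mul, transpose_mul, transpose_transpose, Matrix.mul_assoc]

theorem dotProduct_mul_transpose_mulVec {ι : Type*} [Fintype ι] (K : Matrix ι ι ℝ) (x : ι → ℝ) :
    x ⬝ᵥ ((K * Kᵀ) *ᵥ x) = (Kᵀ *ᵥ x) ⬝ᵥ (Kᵀ *ᵥ x) := by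
  rw [← mulVec_mulVec, dotProduct_mulVec, ← mulVec_transpose]

theorem vecM_dotProduct_kronecker_mulVec (LB : Matrix n n ℝ) (LA : Matrix m m ℝ)
    (C : Matrix n m ℝ) :
    vecM C ⬝ᵥ (((LB * LBᵀ) ⊗ₖ (LA * LAᵀ)) *ᵥ vecM C) =
      vecM (LBᵀ * C * LA) ⬝ᵥ vecM (LBᵀ * C * LA) := by
  rw [mul_kronecker_mul, kroneckerMap_transpose, dotProduct_mul_transpose_mulVec,
    ← kroneckerMap_transpose, kronecker_mulVec_vecM, transpose_transpose]

theorem trace_transpose_mul_self_eq_vecM_dotProduct (X : Matrix n m ℝ) :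
    (Xᵀ * X).trace = vecM X ⬝ᵥ vecM X := by
  rw [vecM_eq_vec_transpose, vec_dotProduct_vec, transpose_transpose, trace_mul_comm]

theorem frobNorm_le_frobNorm_iff (X Y : Matrix n m ℝ) :
    frobNorm X ≤ frobNorm Y ↔ vecM X ⬝ᵥ vecM X ≤ vecM Y ⬝ᵥ vecM Y := by
  simp only [frobNorm, trace_transpose_mul_self_eq_vecM_dotProduct]
  exact Real.sqrt_le_sqrt_iff (by simpa using dotProduct_self_star_nonneg (vecM Y))

end

namespace Matrix

variable {n m R : Type*} [Fintype n] [Fintype m] [DecidableEq n] [DecidableEq m] [CommRing R]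

noncomputable def mulMulEquiv (P : Matrix n n R) (Q : Matrix m m R) (hP : IsUnit P.det)
    (hQ : IsUnit Q.det) : Matrix n m R ≃ Matrix n m R where
  toFun X := P * X * Q
  invFun X := P⁻¹ * X * Q⁻¹
  left_inv X := by
    simp only [Matrix.mul_assoc, mul_nonsing_inv_cancel_right _ _ hQ,
      nonsing_inv_mul_cancel_left _ _ hP]
  right_inv X := by
    simp only [Matrix.mul_assoc, nonsing_inv_mul_cancel_right _ _ hQ,
      mul_nonsing_inv_cancel_left _ _ hP]

theorem rank_mul_mul_of_isUnit_det (P : Matrix n n R) (Q : Matrix m m R) (hP : IsUnit P.det)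
    (hQ : IsUnit Q.det) (X : Matrix n m R) : (P * X * Q).rank = X.rank := by
  rw [rank_mul_eq_left_of_isUnit_det Q _ hQ, rank_mul_eq_right_of_isUnit_det P _ hP]

end Matrix

/-- With `A = L_A L_Aᵀ`, `B = L_B L_Bᵀ` and `M = L_Bᵀ W* L_A`, a matrix
`W` of rank at most `r` minimizes `vec(W* − W)ᵀ (B ⊗ A) vec(W* − W)` over rank-≤ r matrices
iff `L_Bᵀ W L_A` has rank at most `r` and minimizes `Y ↦ ‖M − Y‖_F` over rank-≤ r matrices. -/
theorem stmt_1 {m n : ℕ} (r : ℕ)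
    (LA : Matrix (Fin m) (Fin m) ℝ) (LB : Matrix (Fin n) (Fin n) ℝ)
    (hLA : IsUnit LA.det) (hLB : IsUnit LB.det)
    (Wstar W : Matrix (Fin n) (Fin m) ℝ)
    (hW : W.rank ≤ r) :
    (∀ W' : Matrix (Fin n) (Fin m) ℝ, W'.rank ≤ r →
      vecM (Wstar - W) ⬝ᵥ (((LB * LBᵀ) ⊗ₖ (LA * LAᵀ)) *ᵥ vecM (Wstar - W)) ≤
      vecM (Wstar - W') ⬝ᵥ (((LB * LBᵀ) ⊗ₖ (LA * LAᵀ)) *ᵥ vecM (Wstar - W'))) ↔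
    ((LBᵀ * W * LA).rank ≤ r ∧
      ∀ Y : Matrix (Fin n) (Fin m) ℝ, Y.rank ≤ r →
        frobNorm (LBᵀ * Wstar * LA - LBᵀ * W * LA) ≤ frobNorm (LBᵀ * Wstar * LA - Y)) := by
  have hLBt : IsUnit LBᵀ.det := by rwa [det_transpose]
  let T := mulMulEquiv LBᵀ LA hLBt hLA
  have hT (X : Matrix (Fin n) (Fin m) ℝ) : T X = LBᵀ * X * LA := rfl
  have hrank (X : Matrix (Fin n) (Fin m) ℝ) : (T X).rank = X.rank :=
    rank_mul_mul_of_isUnit_det _ _ hLBt hLA X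
  have hobj (X : Matrix (Fin n) (Fin m) ℝ) :
      vecM (Wstar - X) ⬝ᵥ (((LB * LBᵀ) ⊗ₖ (LA * LAᵀ)) *ᵥ vecM (Wstar - X)) =
        vecM (T Wstar - T X) ⬝ᵥ vecM (T Wstar - T X) := by
    rw [vecM_dotProduct_kronecker_mulVec, Matrix.mul_sub, Matrix.sub_mul]; rfl
  simp only [hobj, ← hT, frobNorm_le_frobNorm_iff]
  rw [hrank, and_iff_right hW]
  exact T.forall_congr fun X => by rw [hrank]
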